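/- Let (s,t) be an edge with s<t. If an execution contains two transitions C_0 ↦ C_1 and D_0 ↦ D_1 with C_1 ↦* D_0, in each of which node t executes the rule Marriage(s), then node s executes the rule Seduction(t) in some transition occurring between configurations C_1 and D_0. -/

import Mathlib

/-!
Formal model of the self-stabilizing maximal-matching algorithm in the
link-register model under read/write atomicity.

Nodes form a finite simple graph `G` on a vertex type `V` whose linear order
plays the role of the distinct identifiers.  A configuration records, for each
node `u`, its pointer `p u : Option V` (`none` = null), its lock variable
`m u : Fin 3`, and for each (directed) link a register `r u v : RegFlag × Fin 3`.
-/

inductive RegFlag where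
  | Idle | You | Other
deriving DecidableEq

abbrev RegVal : Type := RegFlag × Fin 3

inductive Rule (V : Type) where
  | write (a : V)
  | seduction (a : V)
  | marriage (a : V)
  | increase
  | reset
deriving DecidableEq

structure Config (V : Type) where
  p : V → Option V
  m : V → Fin 3
  r : V → V → RegVal

variable {V : Type}

def correctRegisterValue [DecidableEq V] (C : Config V) (u a : V) : RegVal :=
  match C.p u with
  | none => (RegFlag.Idle, 0)
  | some b => if b = a then (RegFlag.You, C.m u) else (RegFlag.Other, C.m u)

def PRabandonment [LinearOrder V] (C : Config V) (u : V) : Prop :=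
  ∃ v, C.p u = some v ∧
    (((C.r v u).1 ≠ RegFlag.You ∧ (v < u ∨ C.m u ≠ 0)) ∨
     (C.r v u = (RegFlag.Other, 2) ∧ u < v))

def PRreset [LinearOrder V] (C : Config V) (u : V) : Prop :=
  ∃ v, C.p u = some v ∧ (C.r v u).1 = RegFlag.You ∧
    ((C.m u = 0 ∧ (C.r v u).2 = 2) ∨
     (C.m u = 2 ∧ (C.r v u).2 = 0) ∨
     (C.m u = 0 ∧ (C.r v u).2 = 1 ∧ v < u) ∨
     (C.m u = 1 ∧ (C.r v u).2 = 0 ∧ u < v) ∨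
     (C.m u = 1 ∧ (C.r v u).2 = 2 ∧ u < v) ∨
     (C.m u = 2 ∧ (C.r v u).2 = 1 ∧ v < u))

/-- The guard of each rule of node `u` in configuration `C`. -/
def eligible [LinearOrder V] (G : SimpleGraph V) (C : Config V) (u : V) : Rule V → Prop
  | .write a => G.Adj u a ∧ C.r u a ≠ correctRegisterValue C u a
  | .seduction a => G.Adj u a ∧ C.p u = none ∧ C.r u a = correctRegisterValue C u a ∧
      C.r a u = (RegFlag.Idle, 0) ∧ u < a
  | .marriage a => G.Adj u a ∧ C.p u = none ∧ C.r u a = correctRegisterValue C u a ∧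
      C.r a u = (RegFlag.You, 0) ∧ a < u
  | .increase => ∃ v, C.p u = some v ∧ C.r u v = correctRegisterValue C u v ∧
      (C.r v u).1 = RegFlag.You ∧
      ((C.m u = 0 ∧ ((u < v ∧ (C.r v u).2 = 1) ∨ (v < u ∧ (C.r v u).2 = 0))) ∨
       (C.m u = 1 ∧ ((u < v ∧ (C.r v u).2 = 1) ∨ (v < u ∧ (C.r v u).2 = 2))))
  | .reset => ∃ v, C.p u = some v ∧ C.r u v = correctRegisterValue C u v ∧
      (PRabandonment C u ∨ PRreset C u)

/-- Simultaneous application of (at most) one rule per node.  `A u = some R`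
means node `u` executes rule `R`; each action only modifies the data owned by
the acting node. -/
def step [DecidableEq V] (C : Config V) (A : V → Option (Rule V)) : Config V where
  p u :=
    match A u with
    | some (Rule.seduction a) => some a
    | some (Rule.marriage a) => some a
    | some Rule.reset => none
    | _ => C.p u
  m u :=
    match A u with
    | some (Rule.seduction _) => 0
    | some (Rule.marriage _) => 0
    | some Rule.reset => 0
    | some Rule.increase => C.m u + 1
    | _ => C.m u
  r u a :=
    match A u with
    | some (Rule.write b) => if a = b then correctRegisterValue C u a else C.r u a
    | _ => C.r u a

/-- An execution `C_0, A_0, C_1, A_1, …, C_T`: at each transition `i < T`, a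
nonempty set of eligible rules (at most one per node) is executed
simultaneously. -/
structure Execution [LinearOrder V] (G : SimpleGraph V) where
  T : ℕ
  conf : ℕ → Config V
  act : ℕ → V → Option (Rule V)
  act_nonempty : ∀ i < T, ∃ u, (act i u).isSome
  act_eligible : ∀ i < T, ∀ u R, act i u = some R → eligible G (conf i) u R
  conf_succ : ∀ i < T, conf (i + 1) = step (conf i) (act i)

/-- A configuration is stable if no rule is eligible at any node. -/
def stableConfig [LinearOrder V] (G : SimpleGraph V) (C : Config V) : Prop :=
  ∀ u R, ¬ eligible G C u R

/-- The edge `(s,t)` (with `s < t` intended) is in state `(You, α, β)`. -/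
def edgeState (C : Config V) (s t : V) (α β : Fin 3) : Prop :=
  C.p s = some t ∧ C.p t = some s ∧ C.m s = α ∧ C.m t = β

def updatedCorrectState (C : Config V) (s t : V) (α β : Fin 3) : Prop :=
  edgeState C s t α β ∧ C.r s t = (RegFlag.You, α) ∧ C.r t s = (RegFlag.You, β) ∧
    ((α, β) = ((0 : Fin 3), (0 : Fin 3)) ∨ (α, β) = (0, 1) ∨ (α, β) = (1, 1) ∨
     (α, β) = (2, 1) ∨ (α, β) = (2, 2))

def toUpdateCorrectState (C : Config V) (s t : V) (α β : Fin 3) : Prop :=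
  edgeState C s t α β ∧
    ((((α, β) = ((0 : Fin 3), (1 : Fin 3)) ∨ (α, β) = (2, 2)) ∧
        C.r s t = (RegFlag.You, α) ∧ C.r t s = (RegFlag.You, β - 1)) ∨
     (((α, β) = ((1 : Fin 3), (1 : Fin 3)) ∨ (α, β) = (2, 1)) ∧
        C.r s t = (RegFlag.You, α - 1) ∧ C.r t s = (RegFlag.You, β)))

def correctState (C : Config V) (s t : V) (α β : Fin 3) : Prop :=
  updatedCorrectState C s t α β ∨ toUpdateCorrectState C s t α β

/-- Node `u` executes a `v`-rule in transition `k`: one of `Write(v)`,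
`Seduction(v)`, `Marriage(v)`, a `v`-`Increase` or a `v`-`Reset`. -/
def execVRule [LinearOrder V] {G : SimpleGraph V} (E : Execution G) (k : ℕ) (u v : V) : Prop :=
  k < E.T ∧
    (E.act k u = some (Rule.write v) ∨ E.act k u = some (Rule.seduction v) ∨
     E.act k u = some (Rule.marriage v) ∨
     ((E.act k u = some Rule.increase ∨ E.act k u = some Rule.reset) ∧
       (E.conf k).p u = some v))

/-!
After `Marriage(s)` at step `i`, node `t` points to `s`, so it has to `Reset` before its next
`Marriage(s)` at step `j`. As long as `r_{st} = (You,0)`, node `t` can neither reset nor raise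
`m_t` to `2`; hence `r_{st}` leaves `(You,0)` strictly between `i` and `j`, and it is `(You,0)`
again at `j`. Only a `Write(t)` of `s` taken while `p_s = t ∧ m_s = 0` restores that value, and
by induction this cannot happen unless `s` newly establishes `p_s = t ∧ m_s = 0` in between. Since
`s < t`, that is a `Seduction(t)`, and it cannot be step `i`, where the guard of `Seduction(t)`
would need `r_{st} = (Idle,0)`.
-/

def Config.FreshlyPoints (C : Config V) (u a : V) : Prop :=
  C.p u = some a ∧ C.m u = 0

lemma correctRegisterValue_eq_you_zero_iff [DecidableEq V] {C : Config V} {u a : V} :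
    correctRegisterValue C u a = (RegFlag.You, 0) ↔ C.FreshlyPoints u a := by
  unfold correctRegisterValue Config.FreshlyPoints
  rcases C.p u with _ | b
  · simp
  · by_cases hb : b = a <;> simp [hb]

namespace Execution

variable [LinearOrder V] {G : SimpleGraph V} (E : Execution G)

lemma r_succ_eq_or_eq_correctRegisterValue {n : ℕ} (hn : n < E.T) (u a : V) :
    (E.conf (n + 1)).r u a = (E.conf n).r u a ∨
      (E.conf (n + 1)).r u a = correctRegisterValue (E.conf n) u a := by
  rw [E.conf_succ n hn]
  simp only [step]
  split
  · split_ifs <;> simp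
  · simp

lemma act_eq_seduction_or_marriage_of_freshlyPoints {n : ℕ} (hn : n < E.T) {u a : V}
    (hpre : ¬(E.conf n).FreshlyPoints u a) (hpost : (E.conf (n + 1)).FreshlyPoints u a) :
    E.act n u = some (Rule.seduction a) ∨ E.act n u = some (Rule.marriage a) := by
  rw [Config.FreshlyPoints, E.conf_succ n hn] at hpost
  rcases hA : E.act n u with _ | (b | b | b | _ | _) <;> simp [step, hA] at hpost
  · exact absurd hpost hpre
  · exact absurd hpost hpre
  · simp [hpost]
  · simp [hpost]
  · obtain ⟨v, -, -, -, hm⟩ := E.act_eligible n hn u _ hA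
    rcases hm with ⟨hm, -⟩ | ⟨hm, -⟩ <;> simp [hm] at hpost

lemma p_succ_eq_and_m_succ_ne_two {n : ℕ} (hn : n < E.T) {s t : V} (hst : s < t)
    (hp : (E.conf n).p t = some s) (hm : (E.conf n).m t ≠ 2)
    (hr : (E.conf n).r s t = (RegFlag.You, 0)) :
    (E.conf (n + 1)).p t = some s ∧ (E.conf (n + 1)).m t ≠ 2 := by
  have helig := E.act_eligible n hn t
  rw [E.conf_succ n hn]
  rcases hA : E.act n t with _ | (b | b | b | _ | _) <;> simp only [step, hA]
  case none | write => exact ⟨hp, hm⟩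
  case seduction | marriage =>
    obtain ⟨-, hnone, -⟩ := helig _ hA
    simp [hp] at hnone
  case increase =>
    obtain ⟨v, hv, -, -, hguard⟩ := helig _ hA
    obtain rfl : v = s := Option.some_injective _ (hv.symm.trans hp)
    simp [hr, hst, hst.not_gt] at hguard
    simp [hp, hguard]
  case reset =>
    obtain ⟨v, hv, -, hguard⟩ := helig _ hA
    simp [PRabandonment, PRreset, hp, hr, hst.not_gt, hm] at hguard

lemma r_eq_idle_of_seduction {n : ℕ} (hn : n < E.T) {u a : V}
    (h : E.act n u = some (Rule.seduction a)) : (E.conf n).r u a = (RegFlag.Idle, 0) := by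
  obtain ⟨-, hnone, hr, -⟩ := E.act_eligible n hn u _ h
  simpa [correctRegisterValue, hnone] using hr

lemma exists_r_ne_you_zero_of_marriage_of_marriage {s t : V} (hst : s < t) {i j : ℕ}
    (hij : i + 1 ≤ j) (hjT : j < E.T) (hi : E.act i t = some (Rule.marriage s))
    (hj : E.act j t = some (Rule.marriage s)) :
    ∃ n, i + 1 ≤ n ∧ n < j ∧ (E.conf n).r s t ≠ (RegFlag.You, 0) := by
  by_contra! hr
  have hmarried : ∀ n, i + 1 ≤ n → n ≤ j →
      (E.conf n).p t = some s ∧ (E.conf n).m t ≠ 2 := by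
    intro n hn
    induction n, hn using Nat.le_induction with
    | base =>
      intro _
      rw [E.conf_succ i (by omega)]
      simp [step, hi]
    | succ n hn ih =>
      intro hnj
      obtain ⟨hp, hm⟩ := ih (by omega)
      exact E.p_succ_eq_and_m_succ_ne_two (by omega) hst hp hm (hr n hn (by omega))
  obtain ⟨-, hnone, -⟩ := E.act_eligible j hjT t _ hj
  simp [(hmarried j hij le_rfl).1] at hnone

lemma exists_seduction_or_marriage_of_r_leaves_you_zero {u a : V} {i n₀ j : ℕ}
    (hin₀ : i ≤ n₀) (hn₀j : n₀ ≤ j) (hjT : j ≤ E.T) (hi : (E.conf i).r u a = (RegFlag.You, 0))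
    (hn₀ : (E.conf n₀).r u a ≠ (RegFlag.You, 0)) (hj : (E.conf j).r u a = (RegFlag.You, 0)) :
    ∃ k, i ≤ k ∧ k < j ∧
      (E.act k u = some (Rule.seduction a) ∨ E.act k u = some (Rule.marriage a)) := by
  by_contra! hnew
  have hfresh_pred : ∀ n, i ≤ n → n < j →
      (E.conf (n + 1)).FreshlyPoints u a → (E.conf n).FreshlyPoints u a :=
    fun n hin hnj hpost => by_contra fun hpre =>
      (E.act_eq_seduction_or_marriage_of_freshlyPoints (by omega) hpre hpost).elim
        (hnew n hin hnj).1 (hnew n hin hnj).2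
  have hsynced : ∀ n, i ≤ n → n ≤ j → (E.conf n).FreshlyPoints u a →
      (E.conf n).r u a = (RegFlag.You, 0) := by
    intro n hn
    induction n, hn using Nat.le_induction with
    | base => exact fun _ _ => hi
    | succ n hn ih =>
      intro hnj hfresh
      have hfresh' := hfresh_pred n hn (by omega) hfresh
      rcases E.r_succ_eq_or_eq_correctRegisterValue (show n < E.T by omega) u a with h | h
      · rw [h, ih (by omega) hfresh']
      · rw [h, correctRegisterValue_eq_you_zero_iff]
        exact hfresh'
  have hdrifted : ∀ n, n₀ ≤ n → n ≤ j → ¬(E.conf n).FreshlyPoints u a ∧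
      (E.conf n).r u a ≠ (RegFlag.You, 0) := by
    intro n hn
    induction n, hn using Nat.le_induction with
    | base => exact fun hn₀j => ⟨fun hfresh => hn₀ (hsynced n₀ hin₀ hn₀j hfresh), hn₀⟩
    | succ n hn ih =>
      intro hnj
      obtain ⟨hnot, hr⟩ := ih (by omega)
      refine ⟨fun hfresh => hnot (hfresh_pred n (by omega) (by omega) hfresh), ?_⟩
      rcases E.r_succ_eq_or_eq_correctRegisterValue (show n < E.T by omega) u a with h | h
      · rwa [h]
      · rwa [h, Ne, correctRegisterValue_eq_you_zero_iff]
  exact (hdrifted j hn₀j le_rfl).2 hj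

end Execution

theorem stmt_8_general {V : Type} [LinearOrder V] (G : SimpleGraph V)
    (s t : V) (hst : s < t) (E : Execution G)
    (i j : ℕ) (hij : i + 1 ≤ j) (hjT : j < E.T)
    (hi : E.act i t = some (Rule.marriage s))
    (hj : E.act j t = some (Rule.marriage s)) :
    ∃ k, i + 1 ≤ k ∧ k + 1 ≤ j ∧ E.act k s = some (Rule.seduction t) := by
  have hiT : i < E.T := by omega
  obtain ⟨-, -, -, hri, -⟩ := E.act_eligible i hiT t _ hi
  obtain ⟨-, -, -, hrj, -⟩ := E.act_eligible j hjT t _ hj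
  obtain ⟨n₀, hin₀, hn₀j, hn₀⟩ :=
    E.exists_r_ne_you_zero_of_marriage_of_marriage hst hij hjT hi hj
  obtain ⟨k, hik, hkj, hsed | hmar⟩ :=
    E.exists_seduction_or_marriage_of_r_leaves_you_zero (by omega) hn₀j.le hjT.le hri hn₀ hrj
  · have hki : k ≠ i := by
      rintro rfl
      simp [E.r_eq_idle_of_seduction hiT hsed] at hri
    exact ⟨k, by omega, by omega, hsed⟩
  · obtain ⟨-, -, -, -, hts⟩ := E.act_eligible k (by omega) s _ hmar
    exact absurd hts hst.not_gt

/-- Between two `Marriage(s)` moves of `t` (an edge `(s,t)`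
with `s < t`), node `s` executes a `Seduction(t)` move. -/
theorem stmt_8 {V : Type} [Fintype V] [LinearOrder V] (G : SimpleGraph V)
    (s t : V) (hadj : G.Adj s t) (hst : s < t) (E : Execution G)
    (i j : ℕ) (hij : i + 1 ≤ j) (hjT : j < E.T)
    (hi : E.act i t = some (Rule.marriage s))
    (hj : E.act j t = some (Rule.marriage s)) :
    ∃ k, i + 1 ≤ k ∧ k + 1 ≤ j ∧ E.act k s = some (Rule.seduction t) :=
  stmt_8_general G s t hst E i j hij hjT hi hj
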